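/- arXiv:math-ph/0408022 — 3 statements merged into one kernel-verified Lean document; each statement's English description precedes it below -/
import Mathlib

section
/- For each tempered distribution a ∈ S'(ℝ^n), the formulas (a(𝐩)δ_±(p²−m²), f) = (a, 𝐩 ↦ f(Ω_±(𝐩))/(2ω(𝐩))) define tempered distributions a(𝐩)δ_±(p²−m²) ∈ S'(ℝ^{1+n}), and the resulting maps S'(ℝ^n) → S'(ℝ^{1+n}), a ↦ a(𝐩)δ_±(p²−m²), are ℂ-linear and sequentially continuous with respect to the weak* topologies. -/
open MeasureTheory Filter Topology
set_option maxHeartbeats 1000000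
set_option synthInstance.maxHeartbeats 400000
noncomputable section

/-- The `i`-th standard unit vector of `ℝ^d`. -/
def unitVec {d : ℕ} (i : Fin d) : Fin d → ℝ := Pi.single i 1

/-- Schwartz space `𝓢(ℝ^d, ℂ)`. -/
abbrev Sch (d : ℕ) : Type := SchwartzMap (Fin d → ℝ) ℂ

/-- Tempered distributions `𝓢'(ℝ^d)` (dual space of `Sch d`). -/
abbrev TDist (d : ℕ) : Type := Sch d →L[ℂ] ℂ

/-- `ω(𝐩) = √(𝐩·𝐩 + m²)`. -/
def omegaFn (m : ℝ) {d : ℕ} (p : Fin d → ℝ) : ℝ :=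
  Real.sqrt ((∑ i, (p i) ^ 2) + m ^ 2)

/-- `Ω_σ(𝐩) = (σ·ω(𝐩), 𝐩) ∈ ℝ^{1+d}` (σ = ±1). -/
def OmegaMap (m σ : ℝ) {d : ℕ} (p : Fin d → ℝ) : Fin (d + 1) → ℝ :=
  Fin.cons (σ * omegaFn m p) p

/-- Partial derivative of a function in the `i`-th coordinate direction. -/
def pdCoord {d : ℕ} (i : Fin d) (f : (Fin d → ℝ) → ℂ) : (Fin d → ℝ) → ℂ :=
  fun x => fderiv ℝ f x (Pi.single i 1)

/-- Multi-index partial derivative `∂^α`. -/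
def pdMulti {d : ℕ} (α : Fin d → ℕ) (f : (Fin d → ℝ) → ℂ) : (Fin d → ℝ) → ℂ :=
  (List.finRange d).foldr (fun i g => (pdCoord i)^[α i] g) f

/-- The `(k,β,α)` squeezed seminorm bound:
`sup_{p⁺ ≠ 0} |(p⁺)^k p_⊥^β ∂^α f(𝐩̃)| ≤ C`, where `p⁺` is coordinate `0` and
`p_⊥` the remaining coordinates. -/
def SqBound {d : ℕ} [NeZero d] (k : ℤ) (β α : Fin d → ℕ)
    (f : (Fin d → ℝ) → ℂ) (C : ℝ) : Prop :=
  ∀ x : Fin d → ℝ, x 0 ≠ 0 →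
    |x 0| ^ k * |∏ j ∈ Finset.univ.erase (0 : Fin d), (x j) ^ (β j)| * ‖pdMulti α f x‖ ≤ C

/-- Membership in the squeezed Schwartz space `S_{p⁺}(ℝ^d)`. -/
def IsSqueezed {d : ℕ} [NeZero d] (f : (Fin d → ℝ) → ℂ) : Prop :=
  ContDiff ℝ (⊤ : ℕ∞) f ∧ ∀ (k : ℤ) (β α : Fin d → ℕ), ∃ C : ℝ, SqBound k β α f C

/-- Membership in `S_{p⁺>0}(ℝ^d)` (σ = 1) resp. `S_{p⁺<0}(ℝ^d)` (σ = -1):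
squeezed functions vanishing on `{σ·p⁺ < 0}`. -/
def IsSqueezedSgn {d : ℕ} [NeZero d] (σ : ℝ) (f : (Fin d → ℝ) → ℂ) : Prop :=
  IsSqueezed f ∧ ∀ x : Fin d → ℝ, σ * x 0 < 0 → f x = 0

/-- `T` is the map `a ↦ a(𝐩)δ_σ(p²−m²)`, i.e. for every `a` and every test function `f`,
`(T a)(f) = (a, 𝐩 ↦ f(Ω_σ(𝐩))/(2ω(𝐩)))`. -/
def DeltaPM {d : ℕ} (m σ : ℝ) (T : TDist d → TDist (d + 1)) : Prop :=
  ∀ (a : TDist d) (f : Sch (d + 1)), ∃ g : Sch d,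
    (∀ p, g p = f (OmegaMap m σ p) / (2 * ((omegaFn m p : ℝ) : ℂ))) ∧ T a f = a g

/-- The Klein-Gordon division polynomial `(p⁰)² − 𝐩·𝐩 − m²`. -/
def KGdivPoly (m : ℝ) {n : ℕ} (p : Fin (n + 1) → ℝ) : ℝ :=
  (p 0) ^ 2 - (∑ i : Fin n, (p i.succ) ^ 2) - m ^ 2

/-- The light-cone division polynomial `2p⁺p⁻ − p_⊥·p_⊥ − m²`
(`p⁺` = coordinate 0, `p⁻` = last coordinate). -/
def LCdivPoly (m : ℝ) {n : ℕ} (p : Fin (n + 2) → ℝ) : ℝ :=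
  2 * p 0 * p (Fin.last (n + 1)) - (∑ i : Fin n, (p i.succ.castSucc) ^ 2) - m ^ 2

/-- Minkowski Fourier transform `(F_M f)(p) = ∫ f(x) e^{i(x⁰p⁰ − 𝐱·𝐩)} dx`. -/
def fourierMink {n : ℕ} (f : (Fin (n + 1) → ℝ) → ℂ) (p : Fin (n + 1) → ℝ) : ℂ :=
  ∫ x : Fin (n + 1) → ℝ,
    Complex.exp (Complex.I * ((x 0 * p 0 - ∑ i : Fin n, x i.succ * p i.succ : ℝ) : ℂ)) * f x

/-- Euclidean Fourier transform `(F f)(𝐩) = ∫ f(𝐱) e^{−i𝐱·𝐩} d𝐱`. -/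
def fourierEuc {d : ℕ} (f : (Fin d → ℝ) → ℂ) (p : Fin d → ℝ) : ℂ :=
  ∫ x : Fin d → ℝ, Complex.exp (-(Complex.I * ((∑ i, x i * p i : ℝ) : ℂ))) * f x

/-- Light-cone Fourier transform
`(F_L f)(p̃) = ∫ f(x̃) e^{i(x⁺p⁻ + x⁻p⁺ − x_⊥·p_⊥)} dx̃`
(`x⁺`/`p⁺` = coordinate 0, `x⁻`/`p⁻` = last coordinate). -/
def fourierLC {n : ℕ} (f : (Fin (n + 2) → ℝ) → ℂ) (p : Fin (n + 2) → ℝ) : ℂ :=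
  ∫ x : Fin (n + 2) → ℝ,
    Complex.exp (Complex.I *
      ((x 0 * p (Fin.last (n + 1)) + x (Fin.last (n + 1)) * p 0
        - ∑ i : Fin n, x i.succ.castSucc * p i.succ.castSucc : ℝ) : ℂ)) * f x

/-- Partial light-cone Fourier transform
`(F_L^{𝐱̃→𝐩̃} f)(p⁺,p_⊥) = ∫ f(x_⊥,x⁻) e^{i(x⁻p⁺ − x_⊥·p_⊥)} d𝐱̃`
(position side: `x_⊥` = first `n` coordinates, `x⁻` = last coordinate;
momentum side: `p⁺` = coordinate 0, `p_⊥` = remaining coordinates). -/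
def fourierPartialLC {n : ℕ} (f : (Fin (n + 1) → ℝ) → ℂ) (p : Fin (n + 1) → ℝ) : ℂ :=
  ∫ x : Fin (n + 1) → ℝ,
    Complex.exp (Complex.I *
      ((x (Fin.last n) * p 0 - ∑ i : Fin n, x i.castSucc * p i.succ : ℝ) : ℂ)) * f x

/-- `u ∈ 𝓢'(ℝ^{1+d})` is `C^∞`-dependent on `x⁰` (coordinate 0) as a parameter,
with parameter family `U`. -/
def ParamFamilyC {d : ℕ} (u : TDist (d + 1)) (U : ℝ → TDist d) : Prop :=
  (∀ (f : SchwartzMap ℝ ℂ) (g : Sch d) (h : Sch (d + 1)),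
      (∀ x, h x = f (x 0) * g (Fin.tail x)) →
      u h = ∫ t : ℝ, U t g * f t) ∧
  ∀ g : Sch d, ContDiff ℝ (⊤ : ℕ∞) fun t => U t g

/-- The distributional derivative `∂₀u`, `(∂₀u, f) = −(u, ∂₀f)`. -/
def distDeriv0 {d : ℕ} (u : TDist (d + 1)) : TDist (d + 1) :=
  -(u.comp (LineDeriv.lineDerivOpCLM ℂ (Sch (d + 1)) (unitVec (0 : Fin (d + 1)))))

/-- The Klein-Gordon operator `□ + m² = ∂₀² − Σᵢ∂ᵢ² + m²` on Schwartz space. -/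
def KGop (m : ℝ) {n : ℕ} : Sch (n + 1) →L[ℂ] Sch (n + 1) :=
  (LineDeriv.lineDerivOpCLM ℂ (Sch (n + 1)) (unitVec (0 : Fin (n + 1)))).comp
      (LineDeriv.lineDerivOpCLM ℂ (Sch (n + 1)) (unitVec (0 : Fin (n + 1))))
    - ∑ i : Fin n,
      (LineDeriv.lineDerivOpCLM ℂ (Sch (n + 1)) (unitVec (i.succ : Fin (n + 1)))).comp
        (LineDeriv.lineDerivOpCLM ℂ (Sch (n + 1)) (unitVec (i.succ : Fin (n + 1))))
    + (m ^ 2 : ℂ) • ContinuousLinearMap.id ℂ (Sch (n + 1))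

/-- The LC Klein-Gordon operator `□̃ + m² = 2∂₊∂₋ − Σᵢ∂ᵢ² + m²` on Schwartz space. -/
def LCKGop (m : ℝ) {n : ℕ} : Sch (n + 2) →L[ℂ] Sch (n + 2) :=
  (2 : ℂ) • ((LineDeriv.lineDerivOpCLM ℂ (Sch (n + 2)) (unitVec (0 : Fin (n + 2)))).comp
      (LineDeriv.lineDerivOpCLM ℂ (Sch (n + 2)) (unitVec (Fin.last (n + 1)))))
    - ∑ i : Fin n,
      (LineDeriv.lineDerivOpCLM ℂ (Sch (n + 2)) (unitVec (i.succ.castSucc : Fin (n + 2)))).comp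
        (LineDeriv.lineDerivOpCLM ℂ (Sch (n + 2)) (unitVec (i.succ.castSucc : Fin (n + 2))))
    + (m ^ 2 : ℂ) • ContinuousLinearMap.id ℂ (Sch (n + 2))

/-- The light-cone coordinate change
`κ(x⁰,…,xⁿ) = ((x⁰+xⁿ)/√2, x¹, …, x^{n−1}, (x⁰−xⁿ)/√2)`; it is an involution,
so `κ⁻¹ = κ`. -/
def kappaMap {n : ℕ} (x : Fin (n + 2) → ℝ) : Fin (n + 2) → ℝ :=
  fun j =>
    if j = 0 then (x 0 + x (Fin.last (n + 1))) / Real.sqrt 2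
    else if j = Fin.last (n + 1) then (x 0 - x (Fin.last (n + 1))) / Real.sqrt 2
    else x j

/-- `ω̃(𝐩̃) = (p_⊥·p_⊥ + m²)/(2p⁺)`. -/
def omegaTilde (m : ℝ) {n : ℕ} (pt : Fin (n + 1) → ℝ) : ℝ :=
  ((∑ i : Fin n, (pt i.succ) ^ 2) + m ^ 2) / (2 * pt 0)

/-- `Ω̃(𝐩̃) = (𝐩̃, ω̃(𝐩̃))`. -/
def OmegaTildeMap (m : ℝ) {n : ℕ} (pt : Fin (n + 1) → ℝ) : Fin (n + 2) → ℝ :=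
  Fin.snoc pt (omegaTilde m pt)

/-- The squeezing map `ν_{≷0} = Ω_±⁻¹ ∘ κ⁻¹ ∘ Ω̃_±` (on `{±p⁺ > 0}`); `κ⁻¹ = κ` and
`Ω_±⁻¹` is the projection forgetting the time component. -/
def nuMap (m : ℝ) {n : ℕ} (pt : Fin (n + 1) → ℝ) : Fin (n + 1) → ℝ :=
  Fin.tail (kappaMap (OmegaTildeMap m pt))

/-- `ν*_σ f = j(f ∘ ν_σ)`, the extension by zero of `f ∘ ν_σ` (σ = ±1). -/
def nuStar (m σ : ℝ) {n : ℕ} (f : (Fin (n + 1) → ℝ) → ℂ) : (Fin (n + 1) → ℝ) → ℂ :=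
  fun pt => if 0 < σ * pt 0 then f (nuMap m pt) else 0

/-- Linearity of a functional on the squeezed Schwartz space. -/
def SqLinear {d : ℕ} [NeZero d] (u : Sch d → ℂ) : Prop :=
  (∀ f g : Sch d, IsSqueezed ⇑f → IsSqueezed ⇑g → u (f + g) = u f + u g) ∧
  ∀ (c : ℂ) (f : Sch d), IsSqueezed ⇑f → u (c • f) = c * u f

/-- Continuity of a functional w.r.t. the squeezed seminorm topology. -/
def SqContinuous {d : ℕ} [NeZero d] (u : Sch d → ℂ) : Prop :=
  ∃ (K : Finset ((ℤ × (Fin d → ℕ)) × (Fin d → ℕ))) (C : ℝ),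
    ∀ f : Sch d, IsSqueezed ⇑f → ∀ B : ℝ, 0 ≤ B →
      (∀ idx ∈ K, SqBound idx.1.1 idx.1.2 idx.2 ⇑f B) → ‖u f‖ ≤ C * B

/-- `u` represents an element of `S'_{p⁺}(ℝ^d)`. -/
def IsSqDual {d : ℕ} [NeZero d] (u : Sch d → ℂ) : Prop :=
  SqLinear u ∧ SqContinuous u

/-- `u` represents an element of `S'_{p⁺>0}(ℝ^d)` (σ = 1) resp. `S'_{p⁺<0}(ℝ^d)`
(σ = -1), identified with those elements of `S'_{p⁺}(ℝ^d)` vanishing on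
`S_{p⁺<0}` resp. `S_{p⁺>0}`. -/
def IsSqDualSgn {d : ℕ} [NeZero d] (σ : ℝ) (u : Sch d → ℂ) : Prop :=
  IsSqDual u ∧ ∀ f : Sch d, IsSqueezedSgn (-σ) ⇑f → u f = 0

/-- Continuity of a map of squeezed spaces w.r.t. the squeezed seminorms. -/
def SqContMap {d : ℕ} [NeZero d]
    (T : ((Fin d → ℝ) → ℂ) → ((Fin d → ℝ) → ℂ)) : Prop :=
  ∀ (k : ℤ) (β α : Fin d → ℕ),
    ∃ (K : Finset ((ℤ × (Fin d → ℕ)) × (Fin d → ℕ))) (C : ℝ),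
      ∀ f, IsSqueezed f → ∀ B : ℝ, 0 ≤ B →
        (∀ idx ∈ K, SqBound idx.1.1 idx.1.2 idx.2 f B) →
        SqBound k β α (T f) (C * B)

/-- `Q` is (the function on `{p⁺ ≠ 0}` induced by) an element of the localization
`ℂ[p⁺,p_⊥]_{p⁺}`, i.e. `Q = P/(p⁺)^k` with `P` a polynomial. -/
def IsLaurentLoc {d : ℕ} [NeZero d] (Q : (Fin d → ℝ) → ℂ) : Prop :=
  ∃ (k : ℕ) (P : MvPolynomial (Fin d) ℂ),
    ∀ x : Fin d → ℝ, x 0 ≠ 0 →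
      Q x = MvPolynomial.eval (fun i => ((x i : ℝ) : ℂ)) P / ((x 0 : ℝ) : ℂ) ^ k

/-- `M` is a multiplicator in `S_{p⁺}(ℝ^d)`: for every squeezed `f`, the extension
by zero of `M·f` is again squeezed. -/
def IsMultiplicator {d : ℕ} [NeZero d] (M : (Fin d → ℝ) → ℂ) : Prop :=
  ∀ f, IsSqueezed f → IsSqueezed fun x => if x 0 = 0 then 0 else M x * f x

/-- `f ∈ S_{∂₋}(ℝ^{n+1}) = ⋂_k ∂_{x⁻}^k 𝓢(ℝ^{n+1})`
(`x⁻` = last coordinate). -/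
def IsTame {n : ℕ} (f : Sch (n + 1)) : Prop :=
  ∀ k : ℕ, ∃ h : Sch (n + 1), ∀ x, f x = (pdCoord (Fin.last n))^[k] (⇑h) x

/-- Linearity of a functional on `S_{∂₋}`. -/
def TameLinear {n : ℕ} (u : Sch (n + 1) → ℂ) : Prop :=
  (∀ f g : Sch (n + 1), IsTame f → IsTame g → u (f + g) = u f + u g) ∧
  ∀ (c : ℂ) (f : Sch (n + 1)), IsTame f → u (c • f) = c * u f

/-- Continuity of a functional on `S_{∂₋}` w.r.t. the topology induced from `𝓢`. -/
def TameContinuous {n : ℕ} (u : Sch (n + 1) → ℂ) : Prop :=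
  ∃ (K : Finset (ℕ × ℕ)) (C : ℝ),
    ∀ f : Sch (n + 1), IsTame f →
      ‖u f‖ ≤ C * ((K.sup fun kl => SchwartzMap.seminorm ℝ kl.1 kl.2 :
        Seminorm ℝ (Sch (n + 1))) f)

/-- `u` represents an element of `S'_{∂₋}(ℝ^{n+1})`. -/
def IsTameDual {n : ℕ} (u : Sch (n + 1) → ℂ) : Prop :=
  TameLinear u ∧ TameContinuous u

/-- Characterization of the (unique, sequentially continuous) extension
`ν*_σ : 𝓢'(ℝ^{n+1}) → S'_{p⁺≷0}(ℝ^{n+1})` of `f ↦ j(f ∘ ν_σ)`, where `𝓢` and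
`S_{p⁺≷0}` are embedded into the dual spaces via `f ↦ (g ↦ ∫ f·g)`. -/
def NuStarDualExt {n : ℕ} (m σ : ℝ) (N : TDist (n + 1) → (Sch (n + 1) → ℂ)) : Prop :=
  (∀ a, IsSqDualSgn σ (N a)) ∧
  (∀ (f : Sch (n + 1)) (a : TDist (n + 1)),
      (∀ h : Sch (n + 1), a h = ∫ x, f x * h x) →
      ∀ g : Sch (n + 1), IsSqueezedSgn σ ⇑g →
        N a g = ∫ x, nuStar m σ (⇑f) x * g x) ∧
  (∀ (a : ℕ → TDist (n + 1)) (a₀ : TDist (n + 1)),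
      (∀ h, Tendsto (fun k => a k h) atTop (𝓝 (a₀ h))) →
      ∀ g : Sch (n + 1), IsSqueezedSgn σ ⇑g →
        Tendsto (fun k => N (a k) g) atTop (𝓝 (N a₀ g)))

/-- `u = b(𝐩̃)δ(p̃²−m²)`, i.e. `(u, f) = (b, 𝐩̃ ↦ f(Ω̃(𝐩̃))/(2|p⁺|))`. -/
def DeltaLC {n : ℕ} (m : ℝ) (b : Sch (n + 1) → ℂ) (u : TDist (n + 2)) : Prop :=
  ∀ f : Sch (n + 2), ∃ g : Sch (n + 1),
    (∀ pt, g pt = f (OmegaTildeMap m pt) / (2 * ((|pt 0| : ℝ) : ℂ))) ∧ u f = b g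

/-- `u = b(𝐩̃)δ_σ(p̃²−m²)`, i.e. `(u, f) = (b, 𝐩̃ ↦ Θ(σp⁺)f(Ω̃(𝐩̃))/(2|p⁺|))`. -/
def DeltaLCSgn {n : ℕ} (m σ : ℝ) (b : Sch (n + 1) → ℂ) (u : TDist (n + 2)) : Prop :=
  ∀ f : Sch (n + 2), ∃ g : Sch (n + 1),
    (∀ pt, g pt = if 0 < σ * pt 0 then
        f (OmegaTildeMap m pt) / (2 * ((|pt 0| : ℝ) : ℂ)) else 0) ∧
    u f = b g

/-- A functional on (test functions including) `S_{∂₋}(ℝ^{n+2})` is `C^∞`-dependent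
on `x⁺ ∈ Ω` (coordinate 0) as a parameter, with family `U` in `S'_{∂₋}(ℝ^{n+1})`. -/
def ParamFamilyLCOn {n : ℕ} (Ω : Set ℝ) (u : Sch (n + 2) → ℂ)
    (U : ℝ → (Sch (n + 1) → ℂ)) : Prop :=
  (∀ f : ℝ → ℂ, ContDiff ℝ (⊤ : ℕ∞) f → HasCompactSupport f → tsupport f ⊆ Ω →
      ∀ g : Sch (n + 1), IsTame g →
        ∀ h : Sch (n + 2), (∀ x, h x = f (x 0) * g (Fin.tail x)) →
          u h = ∫ t in Ω, U t g * f t) ∧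
  ∀ g : Sch (n + 1), IsTame g → ContDiffOn ℝ (⊤ : ℕ∞) (fun t => U t g) Ω

/-- `u ∈ 𝓢'(ℝ^{n+2})` admits the tame restriction `u₀` to `{x⁺ = 0}`: its relaxation
is `C^∞`-dependent on `x⁺` in a neighbourhood `Ω` of `0`, with family `U` of tame
generalized functions satisfying `U 0 = u₀`. -/
def AdmitsTameRestriction {n : ℕ} (u : TDist (n + 2)) (u₀ : Sch (n + 1) → ℂ) : Prop :=
  ∃ Ω : Set ℝ, IsOpen Ω ∧ (0 : ℝ) ∈ Ω ∧
    ∃ U : ℝ → (Sch (n + 1) → ℂ), (∀ t ∈ Ω, IsTameDual (U t)) ∧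
      ParamFamilyLCOn Ω (⇑u) U ∧ U 0 = u₀
/-!
Since `m ≠ 0`, rescaling turns `ω` into the Bessel potential `(1 + ‖𝐩‖²)^{1/2}`, so `Ω_σ` and
`1/(2ω)` are smooth with polynomially bounded derivatives, and `‖𝐩‖ ≤ ‖Ω_σ(𝐩)‖`. Hence
`f ↦ f ∘ Ω_σ / (2ω)` is a continuous linear map `𝓢(ℝ^{1+n}) → 𝓢(ℝ^n)`; its transpose is the
required map, and a transpose is linear and weak* (sequentially) continuous.
-/

open Function SchwartzMap

section TemperateGrowth

variable {E F G : Type*} [NormedAddCommGroup E] [NormedSpace ℝ E]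
  [NormedAddCommGroup F] [NormedSpace ℝ F] [NormedAddCommGroup G] [NormedSpace ℝ G]

theorem Function.HasTemperateGrowth.prodMk {f : E → F} {g : E → G}
    (hf : f.HasTemperateGrowth) (hg : g.HasTemperateGrowth) :
    (fun x => (f x, g x)).HasTemperateGrowth := by
  convert ((ContinuousLinearMap.inl ℝ F G).hasTemperateGrowth.comp hf).add
    ((ContinuousLinearMap.inr ℝ F G).hasTemperateGrowth.comp hg) using 1
  ext x <;> simp

end TemperateGrowth

section MassShell

variable {d : ℕ} {m : ℝ}

/-- The norm on the right is the Euclidean one, not the sup norm of `Fin d → ℝ`. -/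
lemma omegaFn_rpow_eq (hm : m ≠ 0) (r : ℝ) (p : Fin d → ℝ) :
    omegaFn m p ^ r = |m| ^ r * (1 + ‖m⁻¹ • WithLp.toLp 2 p‖ ^ 2) ^ (r / 2) := by
  have hsum : (∑ i, p i ^ 2) + m ^ 2 = |m| ^ 2 * (1 + ‖m⁻¹ • WithLp.toLp 2 p‖ ^ 2) := by
    rw [norm_smul, mul_pow, EuclideanSpace.real_norm_sq_eq, sq_abs, norm_inv, Real.norm_eq_abs,
      inv_pow, sq_abs]
    field_simp
    ring
  rw [omegaFn, hsum, Real.sqrt_eq_rpow, ← Real.rpow_mul (by positivity),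
    Real.mul_rpow (by positivity) (by positivity), ← Real.rpow_natCast,
    ← Real.rpow_mul (abs_nonneg m)]
  ring_nf

lemma hasTemperateGrowth_omegaFn_rpow (hm : m ≠ 0) (r : ℝ) :
    (fun p : Fin d → ℝ => omegaFn m p ^ r).HasTemperateGrowth := by
  simp_rw [omegaFn_rpow_eq hm]
  let L : (Fin d → ℝ) →L[ℝ] EuclideanSpace ℝ (Fin d) :=
    m⁻¹ • (EuclideanSpace.equiv (Fin d) ℝ).symm.toContinuousLinearMap
  exact (HasTemperateGrowth.const _).fun_mul
    ((hasTemperateGrowth_one_add_norm_sq_rpow _ (r / 2)).comp L.hasTemperateGrowth)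

lemma hasTemperateGrowth_omegaMap (hm : m ≠ 0) (σ : ℝ) :
    (OmegaMap m σ : (Fin d → ℝ) → Fin (d + 1) → ℝ).HasTemperateGrowth := by
  have hω : (fun p : Fin d → ℝ => σ * omegaFn m p).HasTemperateGrowth := by
    simpa using (HasTemperateGrowth.const σ).fun_mul (hasTemperateGrowth_omegaFn_rpow hm 1)
  exact (Fin.consEquivL ℝ fun _ => ℝ).toContinuousLinearMap.hasTemperateGrowth.comp
    (hω.prodMk HasTemperateGrowth.id')

lemma norm_le_norm_omegaMap (σ : ℝ) (p : Fin d → ℝ) : ‖p‖ ≤ ‖OmegaMap m σ p‖ :=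
  pi_norm_le_iff_of_nonneg (norm_nonneg _) |>.2 fun i => norm_le_pi_norm (OmegaMap m σ p) i.succ

lemma hasTemperateGrowth_inv_two_omegaFn (hm : m ≠ 0) :
    (fun p : Fin d → ℝ => (((2 * omegaFn m p)⁻¹ : ℝ) : ℂ)).HasTemperateGrowth := by
  have h := (HasTemperateGrowth.const (E := Fin d → ℝ) (2⁻¹ : ℝ)).fun_mul
    (hasTemperateGrowth_omegaFn_rpow hm (-1))
  simp only [Real.rpow_neg_one, ← mul_inv] at h
  exact Complex.hasTemperateGrowth_ofReal.comp h

def massShellRestrict (hm : m ≠ 0) (σ : ℝ) : Sch (d + 1) →L[ℂ] Sch d :=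
  smulLeftCLM ℂ (fun p => (((2 * omegaFn m p)⁻¹ : ℝ) : ℂ)) ∘L
    compCLM ℂ (hasTemperateGrowth_omegaMap hm σ)
      ⟨1, 1, fun p => by
        simpa using (norm_le_norm_omegaMap σ p).trans (le_add_of_nonneg_left zero_le_one)⟩

lemma massShellRestrict_apply (hm : m ≠ 0) (σ : ℝ) (f : Sch (d + 1)) (p : Fin d → ℝ) :
    massShellRestrict hm σ f p = f (OmegaMap m σ p) / (2 * ((omegaFn m p : ℝ) : ℂ)) := by
  rw [massShellRestrict, ContinuousLinearMap.comp_apply,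
    smulLeftCLM_apply_apply (hasTemperateGrowth_inv_two_omegaFn hm), compCLM_apply,
    smul_eq_mul, mul_comm, div_eq_mul_inv, Function.comp_apply, Complex.ofReal_inv,
    Complex.ofReal_mul, Complex.ofReal_ofNat]

end MassShell

theorem statement0_general (n : ℕ) (m : ℝ) (hm : 0 < m)
    (σ : ℝ) :
    ∃ T : TDist n →ₗ[ℂ] TDist (n + 1),
      DeltaPM m σ (fun a => T a) ∧
      ∀ (a : ℕ → TDist n) (a₀ : TDist n),
        (∀ g : Sch n, Tendsto (fun k => a k g) atTop (𝓝 (a₀ g))) →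
        ∀ f : Sch (n + 1), Tendsto (fun k => T (a k) f) atTop (𝓝 (T a₀ f)) := by
  let S : Sch (n + 1) →L[ℂ] Sch n := massShellRestrict hm.ne' σ
  exact ⟨(ContinuousLinearMap.precomp ℂ S).toLinearMap,
    fun a f => ⟨S f, massShellRestrict_apply hm.ne' σ f, rfl⟩,
    fun a a₀ ha f => ha (S f)⟩

/-- For each tempered distribution `a ∈ 𝓢'(ℝ^n)`, the formulas
`(a(𝐩)δ_σ(p²−m²), f) = (a, 𝐩 ↦ f(Ω_σ(𝐩))/(2ω(𝐩)))` (σ = ±1) define tempered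
distributions on `ℝ^{1+n}`, and the resulting maps `a ↦ a(𝐩)δ_σ(p²−m²)` are
`ℂ`-linear and sequentially continuous w.r.t. the weak* topologies. -/
theorem statement0 (n : ℕ) (hn : 1 ≤ n) (m : ℝ) (hm : 0 < m)
    (σ : ℝ) (hσ : σ = 1 ∨ σ = -1) :
    ∃ T : TDist n →ₗ[ℂ] TDist (n + 1),
      DeltaPM m σ (fun a => T a) ∧
      ∀ (a : ℕ → TDist n) (a₀ : TDist n),
        (∀ g : Sch n, Tendsto (fun k => a k g) atTop (𝓝 (a₀ g))) →
        ∀ f : Sch (n + 1), Tendsto (fun k => T (a k) f) atTop (𝓝 (T a₀ f)) :=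
  statement0_general n m hm σ

end
end

section
/- Let a₀, a₁, a ∈ S'(ℝ^n). Then (i) a(𝐩)δ_+(p²−m²) = 0 if and only if a = 0, and likewise a(𝐩)δ_−(p²−m²) = 0 if and only if a = 0; (ii) a₀(𝐩)δ_+(p²−m²) + a₁(𝐩)δ_−(p²−m²) = 0 if and only if a₀ = 0 and a₁ = 0. -/
open MeasureTheory Filter Topology
set_option maxHeartbeats 1000000
set_option synthInstance.maxHeartbeats 400000
noncomputable section

/-!
Test `a(𝐩)δ_σ(p²−m²) + a'(𝐩)δ_{−σ}(p²−m²)` against `f(x) = θ(x⁰) g(𝐱)` with `g` compactly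
supported: if `θ(t) = 2t/σ` near `σ·ω(supp g)` and `θ = 0` on `−σ·[m, ∞)`, the two sheets of the
mass shell are separated and the result is `a(g)`. Compactly supported functions are dense in
`𝓢(ℝⁿ)` (cut off by `χ(x/R)`, the error is `O(1/R)` in every Schwartz seminorm), so `a = 0`.
-/

open scoped ContDiff

section Cutoff

variable {E F : Type*} [NormedAddCommGroup E] [NormedSpace ℝ E] [NormedAddCommGroup F]
  [NormedSpace ℝ F]

lemma norm_iteratedFDeriv_comp_smul_le {φ : E → F} (hφ : ContDiff ℝ ∞ φ) {c : ℝ} (hc : |c| ≤ 1)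
    (i : ℕ) (x : E) :
    ‖iteratedFDeriv ℝ i (fun y => φ (c • y)) x‖ ≤ ‖iteratedFDeriv ℝ i φ (c • x)‖ := by
  rw [iteratedFDeriv_comp_const_smul c (hφ.of_le (mod_cast le_top)), norm_smul, norm_pow,
    Real.norm_eq_abs]
  exact mul_le_of_le_one_left (norm_nonneg _) (pow_le_one₀ (abs_nonneg c) hc)

lemma iteratedFDeriv_bump_smul_sub_self_eq_zero [HasContDiffBump E] (χ : ContDiffBump (0 : E))
    (f : E → F) {R : ℝ} (hR : 0 < R) {x : E} (hx : ‖x‖ < χ.rIn * R) (n : ℕ) :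
    iteratedFDeriv ℝ n (fun y => χ (R⁻¹ • y) • f y - f y) x = 0 := by
  have hev : (fun y => χ (R⁻¹ • y) • f y - f y) =ᶠ[𝓝 x] 0 := by
    filter_upwards [Metric.isOpen_ball.mem_nhds (mem_ball_zero_iff.2 hx)] with y hy
    have hy' : R⁻¹ • y ∈ Metric.closedBall (0 : E) χ.rIn := by
      rw [mem_closedBall_zero_iff, norm_smul, Real.norm_eq_abs, abs_inv, abs_of_pos hR,
        inv_mul_le_iff₀ hR]
      linarith [mem_ball_zero_iff.1 hy]
    simp [χ.one_of_mem_closedBall hy']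
  rw [(hev.iteratedFDeriv ℝ n).eq_of_nhds, iteratedFDeriv_zero, Pi.zero_apply]

namespace SchwartzMap

lemma norm_pow_mul_le_seminorm_succ_div (f : 𝓢(E, F)) (k n : ℕ) {R : ℝ} (hR : 0 < R) {x : E}
    (hx : R ≤ ‖x‖) :
    ‖x‖ ^ k * ‖iteratedFDeriv ℝ n f x‖ ≤ SchwartzMap.seminorm ℝ (k + 1) n f / R := by
  rw [le_div_iff₀ hR]
  calc ‖x‖ ^ k * ‖iteratedFDeriv ℝ n f x‖ * R
      ≤ ‖x‖ ^ k * ‖iteratedFDeriv ℝ n f x‖ * ‖x‖ := by gcongr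
    _ = ‖x‖ ^ (k + 1) * ‖iteratedFDeriv ℝ n f x‖ := by ring
    _ ≤ SchwartzMap.seminorm ℝ (k + 1) n f := le_seminorm ℝ (k + 1) n f x

lemma norm_pow_mul_iteratedFDeriv_smul_le {u : E → ℝ} (hu : ContDiff ℝ ∞ u) {M : ℕ → ℝ}
    (hM : ∀ i y, ‖iteratedFDeriv ℝ i u y‖ ≤ M i) (f : 𝓢(E, F)) (k n : ℕ) {R : ℝ} (hR : 0 < R)
    {x : E} (hx : R ≤ ‖x‖) :
    ‖x‖ ^ k * ‖iteratedFDeriv ℝ n (fun y => u y • f y) x‖ ≤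
      (∑ i ∈ Finset.range (n + 1), (n.choose i : ℝ) * M i *
        SchwartzMap.seminorm ℝ (k + 1) (n - i) f) / R := by
  have hM0 : ∀ i, 0 ≤ M i := fun i => (norm_nonneg _).trans (hM i 0)
  calc ‖x‖ ^ k * ‖iteratedFDeriv ℝ n (fun y => u y • f y) x‖
      ≤ ‖x‖ ^ k * ∑ i ∈ Finset.range (n + 1), (n.choose i : ℝ) * M i *
          ‖iteratedFDeriv ℝ (n - i) f x‖ := by
        grw [norm_iteratedFDeriv_smul_le hu (f.smooth ⊤) x (mod_cast le_top)]
        gcongr with i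
        exact hM i x
    _ = ∑ i ∈ Finset.range (n + 1), (n.choose i : ℝ) * M i *
          (‖x‖ ^ k * ‖iteratedFDeriv ℝ (n - i) f x‖) := by
        rw [Finset.mul_sum]
        exact Finset.sum_congr rfl fun i _ => by ring
    _ ≤ ∑ i ∈ Finset.range (n + 1), (n.choose i : ℝ) * M i *
          (SchwartzMap.seminorm ℝ (k + 1) (n - i) f / R) := by
        gcongr with i
        · exact mul_nonneg (Nat.cast_nonneg _) (hM0 i)
        · exact norm_pow_mul_le_seminorm_succ_div f k _ hR hx
    _ = _ := by simp only [← mul_div_assoc, ← Finset.sum_div]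

variable [FiniteDimensional ℝ E]

lemma _root_.ContDiffBump.hasTemperateGrowth_comp_smul (χ : ContDiffBump (0 : E)) (c : ℝ) :
    (fun x => χ (c • x)).HasTemperateGrowth :=
  (χ.hasCompactSupport.toSchwartzMap χ.contDiff).hasTemperateGrowth.comp
    (c • ContinuousLinearMap.id ℝ E).hasTemperateGrowth

lemma exists_seminorm_bump_smul_sub_le (χ : ContDiffBump (0 : E)) (f : 𝓢(E, F)) (k n : ℕ) :
    ∃ C, ∀ R ≥ 1,
      SchwartzMap.seminorm ℝ k n (smulLeftCLM F (fun x => χ (R⁻¹ • x)) f - f) ≤ C / R := by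
  set χS : 𝓢(E, ℝ) := χ.hasCompactSupport.toSchwartzMap χ.contDiff
  set S := ∑ i ∈ Finset.range (n + 1), (n.choose i : ℝ) * SchwartzMap.seminorm ℝ 0 i χS *
    SchwartzMap.seminorm ℝ (k + 1) (n - i) f
  refine ⟨(S + SchwartzMap.seminorm ℝ (k + 1) n f) / χ.rIn, fun R hR => ?_⟩
  have hR0 : 0 < R := by linarith
  have hρ : 0 < χ.rIn * R := mul_pos χ.rIn_pos hR0
  have hC : 0 ≤ (S + SchwartzMap.seminorm ℝ (k + 1) n f) / χ.rIn / R := by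
    have := χ.rIn_pos
    positivity
  refine seminorm_le_bound ℝ k n _ hC fun x => ?_
  set χR : E → ℝ := fun x => χ (R⁻¹ • x)
  have hχR : ContDiff ℝ ∞ χR := χ.contDiff.comp (contDiff_const_smul R⁻¹)
  have hcoe : ⇑(smulLeftCLM F χR f - f) = fun y => χR y • f y - f y := by
    ext y
    simp [χ.hasTemperateGrowth_comp_smul R⁻¹, χR]
  rw [hcoe]
  rcases lt_or_ge ‖x‖ (χ.rIn * R) with hx | hx
  · rwa [iteratedFDeriv_bump_smul_sub_self_eq_zero χ f hR0 hx, norm_zero, mul_zero]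
  have hχR_le : ∀ i y, ‖iteratedFDeriv ℝ i χR y‖ ≤ SchwartzMap.seminorm ℝ 0 i χS := fun i y =>
    (norm_iteratedFDeriv_comp_smul_le χ.contDiff
      (by rw [abs_inv, abs_of_pos hR0]; exact inv_le_one_of_one_le₀ hR) i y).trans
      (norm_iteratedFDeriv_le_seminorm ℝ χS i _)
  rw [fun_iteratedFDeriv_sub_apply (f := fun y => χR y • f y)
    ((hχR.smul (f.smooth ⊤)).contDiffAt.of_le (mod_cast le_top))
    ((f.smooth ⊤).contDiffAt.of_le (mod_cast le_top))]
  calc ‖x‖ ^ k * ‖iteratedFDeriv ℝ n (fun y => χR y • f y) x - iteratedFDeriv ℝ n f x‖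
      ≤ ‖x‖ ^ k * ‖iteratedFDeriv ℝ n (fun y => χR y • f y) x‖ +
          ‖x‖ ^ k * ‖iteratedFDeriv ℝ n f x‖ := by
        rw [← mul_add]
        gcongr
        exact norm_sub_le _ _
    _ ≤ S / (χ.rIn * R) + SchwartzMap.seminorm ℝ (k + 1) n f / (χ.rIn * R) :=
        add_le_add (norm_pow_mul_iteratedFDeriv_smul_le hχR hχR_le f k n hρ hx)
          (norm_pow_mul_le_seminorm_succ_div f k n hρ hx)
    _ = _ := by rw [← add_div, div_div]

theorem tendsto_bump_smul (χ : ContDiffBump (0 : E)) (f : 𝓢(E, F)) :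
    Tendsto (fun R : ℝ => smulLeftCLM F (fun x => χ (R⁻¹ • x)) f) atTop (𝓝 f) := by
  rw [(schwartz_withSeminorms ℝ E F).tendsto_nhds]
  rintro ⟨k, n⟩ ε hε
  obtain ⟨C, hC⟩ := exists_seminorm_bump_smul_sub_le χ f k n
  have hCR : Tendsto (fun R : ℝ => C / R) atTop (𝓝 0) := tendsto_const_nhds.div_atTop tendsto_id
  filter_upwards [hCR.eventually (gt_mem_nhds hε), eventually_ge_atTop 1] with R hRε hR
  exact (hC R hR).trans_lt hRε

theorem dense_hasCompactSupport : Dense {f : 𝓢(E, F) | HasCompactSupport f} := by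
  let χ : ContDiffBump (0 : E) := ⟨1, 2, one_pos, one_lt_two⟩
  refine fun f => mem_closure_of_tendsto (tendsto_bump_smul χ f) ?_
  filter_upwards [eventually_gt_atTop 0] with R hR
  exact (χ.hasCompactSupport.comp_smul (inv_ne_zero hR.ne')).mono'
    ((subset_tsupport _).trans ((tsupport_smulLeftCLM_subset _ f).trans Set.inter_subset_right))

end SchwartzMap

end Cutoff

lemma le_omegaFn {d : ℕ} {m : ℝ} (hm : 0 < m) (p : Fin d → ℝ) : m ≤ omegaFn m p :=
  (Real.le_sqrt' hm).2 (le_add_of_nonneg_left (by positivity))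

lemma continuous_omegaFn (m : ℝ) (d : ℕ) : Continuous (omegaFn m (d := d)) := by
  unfold omegaFn
  fun_prop

@[simp] lemma omegaMap_zero (m σ : ℝ) {d : ℕ} (p : Fin d → ℝ) :
    OmegaMap m σ p 0 = σ * omegaFn m p := Fin.cons_zero _ _

@[simp] lemma tail_omegaMap (m σ : ℝ) {d : ℕ} (p : Fin d → ℝ) :
    Fin.tail (OmegaMap m σ p) = p := Fin.tail_cons _ _

lemma contDiff_fin_tail {d : ℕ} : ContDiff ℝ ∞ (Fin.tail : (Fin (d + 1) → ℝ) → Fin d → ℝ) :=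
  contDiff_pi.2 fun i => contDiff_apply ℝ ℝ i.succ

lemma HasCompactSupport.mul_fin_tail {d : ℕ} {h : ℝ → ℂ} {g : (Fin d → ℝ) → ℂ}
    (hh : HasCompactSupport h) (hg : HasCompactSupport g) :
    HasCompactSupport fun x : Fin (d + 1) → ℝ => h (x 0) * g (Fin.tail x) := by
  have hcons : Continuous fun q : ℝ × (Fin d → ℝ) => (Fin.cons q.1 q.2 : Fin (d + 1) → ℝ) := by
    fun_prop
  refine HasCompactSupport.intro ((hh.isCompact.prod hg.isCompact).image hcons)
    fun x hx => by_contra fun hne => hx ?_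
  exact ⟨(x 0, Fin.tail x), ⟨subset_tsupport _ (left_ne_zero_of_mul hne),
    subset_tsupport _ (right_ne_zero_of_mul hne)⟩, Fin.cons_self_tail x⟩

lemma exists_schwartz_eq_on_massShell {n : ℕ} {m σ : ℝ} (hm : 0 < m) (hσ : σ ≠ 0) {g : Sch n}
    (hg : HasCompactSupport g) :
    ∃ f : Sch (n + 1), (∀ p, f (OmegaMap m σ p) = 2 * omegaFn m p * g p) ∧
      ∀ p, f (OmegaMap m (-σ) p) = 0 := by
  obtain ⟨R, hR⟩ := (hg.isCompact.image (continuous_omegaFn m n)).bddAbove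
  -- `ψ = 1` on `σ • [m, R]` and `ψ = 0` on `-σ • [0, ∞)`
  let ψ : ContDiffBump (σ * (|R| + m)) :=
    ⟨|σ| * (|R| + m / 2), |σ| * (|R| + m), by positivity, by gcongr; linarith⟩
  let θ : ℝ → ℝ := fun t => 2 * t / σ * ψ t
  have hθ : ContDiff ℝ ∞ θ := ((contDiff_const.mul contDiff_id).div_const σ).mul ψ.contDiff
  have hθc : HasCompactSupport θ := ψ.hasCompactSupport.mul_left
  let F : (Fin (n + 1) → ℝ) → ℂ := fun x => (θ (x 0) : ℂ) * g (Fin.tail x)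
  have hF : ContDiff ℝ ∞ F :=
    (Complex.ofRealCLM.contDiff.comp (hθ.comp (contDiff_apply ℝ ℝ 0))).mul
      ((g.smooth ⊤).comp contDiff_fin_tail)
  have hFc : HasCompactSupport F := (hθc.comp_left Complex.ofReal_zero).mul_fin_tail hg
  refine ⟨hFc.toSchwartzMap hF, fun p => ?_, fun p => ?_⟩
  · by_cases hp : p ∈ tsupport g
    · have hω := le_omegaFn hm p
      have hωR : omegaFn m p ≤ R := hR ⟨p, hp, rfl⟩
      have hψ : ψ (σ * omegaFn m p) = 1 := by
        refine ψ.one_of_mem_closedBall ?_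
        rw [Metric.mem_closedBall, Real.dist_eq, ← mul_sub, abs_mul]
        change _ ≤ |σ| * (|R| + m / 2)
        gcongr
        rw [abs_le]
        constructor <;> linarith [le_abs_self R, abs_nonneg R]
      have hθω : θ (σ * omegaFn m p) = 2 * omegaFn m p := by
        simp only [θ, hψ]
        field_simp
      change F (OmegaMap m σ p) = _
      simp [F, hθω]
    · simp [F, image_eq_zero_of_notMem_tsupport hp]
  · have hψ : ψ (-(σ * omegaFn m p)) = 0 := by
      refine ψ.zero_of_le_dist ?_
      have hω := le_omegaFn hm p
      change |σ| * (|R| + m) ≤ _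
      rw [Real.dist_eq, show -(σ * omegaFn m p) - σ * (|R| + m) = -σ * (omegaFn m p + (|R| + m))
        by ring, abs_mul, abs_neg, abs_of_pos (a := omegaFn m p + _) (by linarith [abs_nonneg R])]
      exact mul_le_mul_of_nonneg_left (by linarith) (abs_nonneg σ)
    simp [F, θ, hψ]

namespace DeltaPM

variable {n : ℕ} {m σ : ℝ} {T T' : TDist n → TDist (n + 1)}

lemma map_zero (hT : DeltaPM m σ T) : T 0 = 0 := by
  ext f
  obtain ⟨g, -, hg⟩ := hT 0 f
  simpa using hg

lemma eq_zero_of_add_eq_zero (hm : 0 < m) (hσ : σ ≠ 0) (hT : DeltaPM m σ T)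
    (hT' : DeltaPM m (-σ) T') {a a' : TDist n} (h : T a + T' a' = 0) : a = 0 := by
  refine DFunLike.coe_injective <|
    Continuous.ext_on SchwartzMap.dense_hasCompactSupport a.continuous continuous_zero
      fun g (hg : HasCompactSupport g) => ?_
  obtain ⟨f, hf, hf'⟩ := exists_schwartz_eq_on_massShell hm hσ hg
  obtain ⟨g₁, hg₁, hTa⟩ := hT a f
  obtain ⟨g₂, hg₂, hT'a'⟩ := hT' a' f
  have hg₁g : g₁ = g := by
    ext p
    have hω : (2 * (omegaFn m p : ℂ)) ≠ 0 := by
      have := le_omegaFn hm p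
      exact mul_ne_zero two_ne_zero (Complex.ofReal_ne_zero.2 (by linarith))
    rw [hg₁, hf, mul_div_cancel_left₀ _ hω]
  have hg₂0 : g₂ = 0 := by
    ext p
    simp [hg₂, hf']
  have := congrArg (· f) h
  simpa [hTa, hT'a', hg₁g, hg₂0] using this

end DeltaPM

theorem statement1_general (n : ℕ) (m : ℝ) (hm : 0 < m)
    (Tp Tm : TDist n → TDist (n + 1))
    (hTp : DeltaPM m 1 Tp) (hTm : DeltaPM m (-1) Tm)
    (a₀ a₁ a : TDist n) :
    ((Tp a = 0 ↔ a = 0) ∧ (Tm a = 0 ↔ a = 0)) ∧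
    (Tp a₀ + Tm a₁ = 0 ↔ a₀ = 0 ∧ a₁ = 0) := by
  have hTp' : DeltaPM m (-(-1)) Tp := by rwa [neg_neg]
  have hp : ∀ {b b'}, Tp b + Tm b' = 0 → b = 0 :=
    hTp.eq_zero_of_add_eq_zero hm one_ne_zero hTm
  have hm' : ∀ {b b'}, Tm b + Tp b' = 0 → b = 0 :=
    hTm.eq_zero_of_add_eq_zero hm (neg_ne_zero.2 one_ne_zero) hTp'
  have hTp0 := hTp.map_zero
  have hTm0 := hTm.map_zero
  refine ⟨⟨⟨fun h => hp (b' := 0) ?_, fun h => h ▸ hTp0⟩,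
    ⟨fun h => hm' (b' := 0) ?_, fun h => h ▸ hTm0⟩⟩,
    ⟨fun h => ⟨hp h, hm' ((add_comm _ _).trans h)⟩, fun ⟨h₀, h₁⟩ => ?_⟩⟩
  · rw [h, hTm0, add_zero]
  · rw [h, hTp0, add_zero]
  · rw [h₀, h₁, hTp0, hTm0, add_zero]

/-- Let `a₀, a₁, a ∈ 𝓢'(ℝ^n)`. Then (i) `a(𝐩)δ_±(p²−m²) = 0` iff
`a = 0`; (ii) `a₀(𝐩)δ_+(p²−m²) + a₁(𝐩)δ_−(p²−m²) = 0` iff `a₀ = 0` and `a₁ = 0`.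
Here `Tp`/`Tm` are the maps `a ↦ a(𝐩)δ_+(p²−m²)` / `a ↦ a(𝐩)δ_−(p²−m²)`,
characterized by the hypotheses `hTp`/`hTm`. -/
theorem statement1 (n : ℕ) (hn : 1 ≤ n) (m : ℝ) (hm : 0 < m)
    (Tp Tm : TDist n → TDist (n + 1))
    (hTp : DeltaPM m 1 Tp) (hTm : DeltaPM m (-1) Tm)
    (a₀ a₁ a : TDist n) :
    ((Tp a = 0 ↔ a = 0) ∧ (Tm a = 0 ↔ a = 0)) ∧
    (Tp a₀ + Tm a₁ = 0 ↔ a₀ = 0 ∧ a₁ = 0) :=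
  statement1_general n m hm Tp Tm hTp hTm a₀ a₁ a

end
end

section
/- The Heaviside functions Θ(p⁺) and Θ(−p⁺), as well as the functions |p⁺|^k for every k ∈ ℤ (in particular the non-locally-integrable function 1/|p⁺|), restricted to ℝ^n ∖ {p⁺=0}, are multiplicators in S_{p⁺}(ℝ^n). -/
open MeasureTheory Filter Topology
set_option maxHeartbeats 1000000
set_option synthInstance.maxHeartbeats 400000
noncomputable section

/-!
On `{p⁺ ≠ 0}` each of the multiplicators has the form `(a Θ(p⁺) + b Θ(-p⁺)) (p⁺)ᵏ`, and by the
product rule a partial derivative of such a multiplicator times `f` is a linear combination of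
products of the same kind, with `k` lowered by one and `f` replaced by a partial derivative of `f`.
Squeezed decay of `f` makes every such product vanish to second order on `{p⁺ = 0}`, hence be
differentiable there. So the span of all products with `f` squeezed consists of differentiable
functions and is closed under partial derivatives, which makes its elements smooth, and the
squeezed seminorm bounds only get shifted in `k`.
-/

open scoped ContDiff

theorem contDiff_infty_of_forall_fderiv_apply {E F : Type*} [NormedAddCommGroup E]
    [NormedSpace ℝ E] [FiniteDimensional ℝ E] [NormedAddCommGroup F] [NormedSpace ℝ F]
    {P : (E → F) → Prop} (hdiff : ∀ g, P g → Differentiable ℝ g)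
    (hderiv : ∀ g, P g → ∀ v, P fun x => fderiv ℝ g x v) {g : E → F} (hg : P g) :
    ContDiff ℝ ∞ g := by
  refine contDiff_infty.mpr fun N => ?_
  induction N generalizing g with
  | zero => exact contDiff_zero.mpr (hdiff g hg).continuous
  | succ N ih =>
    exact contDiff_succ_iff_fderiv_apply.mpr
      ⟨hdiff g hg, by simp, fun v => ih (hderiv g hg v)⟩

section PartialDerivatives

variable {d : ℕ}

theorem fderiv_apply_eq_sum_pdCoord (g : (Fin d → ℝ) → ℂ) (x v : Fin d → ℝ) :
    fderiv ℝ g x v = ∑ i, v i • pdCoord i g x := by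
  conv_lhs => rw [← Finset.univ_sum_single v]
  simp only [map_sum, pdCoord]
  refine Finset.sum_congr rfl fun i _ => ?_
  rw [← ContinuousLinearMap.map_smul, ← Pi.single_smul, smul_eq_mul, mul_one]

theorem pdCoord_zero (i : Fin d) : pdCoord i (0 : (Fin d → ℝ) → ℂ) = 0 := by
  funext x
  simp [pdCoord, Pi.zero_def]

theorem pdCoord_add {g h : (Fin d → ℝ) → ℂ} (hg : Differentiable ℝ g)
    (hh : Differentiable ℝ h) (i : Fin d) : pdCoord i (g + h) = pdCoord i g + pdCoord i h := by
  funext x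
  simp [pdCoord, fderiv_add (hg x) (hh x)]

theorem pdCoord_smul (c : ℂ) {g : (Fin d → ℝ) → ℂ} (hg : Differentiable ℝ g) (i : Fin d) :
    pdCoord i (c • g) = c • pdCoord i g := by
  funext x
  simp [pdCoord, fderiv_const_smul (hg x)]

theorem pdCoord_contDiff {f : (Fin d → ℝ) → ℂ} (hf : ContDiff ℝ ∞ f) (i : Fin d) :
    ContDiff ℝ ∞ (pdCoord i f) :=
  (hf.fderiv_right (by simp)).clm_apply contDiff_const

theorem pdCoord_pdCoord_comm {f : (Fin d → ℝ) → ℂ} (hf : ContDiff ℝ 2 f) (i j : Fin d) :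
    pdCoord i (pdCoord j f) = pdCoord j (pdCoord i f) := by
  have hdf : Differentiable ℝ (fderiv ℝ f) := (hf.fderiv_right le_rfl).differentiable one_ne_zero
  have hsnd : ∀ u v x, pdCoord u (pdCoord v f) x
      = fderiv ℝ (fderiv ℝ f) x (Pi.single u 1) (Pi.single v 1) := by
    intro u v x
    show fderiv ℝ (fun y => fderiv ℝ f y (Pi.single v 1)) x (Pi.single u 1) = _
    rw [fderiv_clm_apply (hdf x) (differentiableAt_const _)]
    simp
  funext x
  rw [hsnd, hsnd]
  exact hf.contDiffAt.isSymmSndFDerivAt (by simp) _ _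

def iterPd (l : List (Fin d)) (f : (Fin d → ℝ) → ℂ) : (Fin d → ℝ) → ℂ :=
  l.foldr pdCoord f

theorem iterPd_append (l l' : List (Fin d)) (f : (Fin d → ℝ) → ℂ) :
    iterPd (l ++ l') f = iterPd l (iterPd l' f) :=
  List.foldr_append

theorem iterPd_contDiff {f : (Fin d → ℝ) → ℂ} (hf : ContDiff ℝ ∞ f) (l : List (Fin d)) :
    ContDiff ℝ ∞ (iterPd l f) := by
  induction l with
  | nil => exact hf
  | cons i l ih => exact pdCoord_contDiff ih i

theorem iterPd_perm {f : (Fin d → ℝ) → ℂ} (hf : ContDiff ℝ ∞ f) {l l' : List (Fin d)}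
    (h : l.Perm l') : iterPd l f = iterPd l' f := by
  induction h with
  | nil => rfl
  | cons i _ ih => exact congrArg (pdCoord i) ih
  | swap i j l => exact pdCoord_pdCoord_comm ((iterPd_contDiff hf l).of_le ENat.LEInfty.out) j i
  | trans _ _ ih₁ ih₂ => exact ih₁.trans ih₂

def multiIndexList (α : Fin d → ℕ) : List (Fin d) :=
  (List.finRange d).flatMap fun i => List.replicate (α i) i

theorem count_multiIndexList (α : Fin d → ℕ) (j : Fin d) :
    (multiIndexList α).count j = α j := by
  simp [multiIndexList, List.count_flatMap, ← Fin.sum_univ_def, Function.comp_def,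
    List.count_replicate]

theorem pdMulti_eq_iterPd (α : Fin d → ℕ) (f : (Fin d → ℝ) → ℂ) :
    pdMulti α f = iterPd (multiIndexList α) f := by
  unfold pdMulti multiIndexList
  induction List.finRange d with
  | nil => rfl
  | cons i L ih =>
    rw [List.foldr_cons, ih, List.flatMap_cons, iterPd_append]
    induction α i with
    | zero => rfl
    | succ m ihm => rw [Function.iterate_succ_apply', ihm]; rfl

theorem pdMulti_zero (f : (Fin d → ℝ) → ℂ) : pdMulti 0 f = f := by
  unfold pdMulti
  induction List.finRange d <;> simp_all

theorem pdMulti_pdCoord {f : (Fin d → ℝ) → ℂ} (hf : ContDiff ℝ ∞ f) (α : Fin d → ℕ)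
    (i : Fin d) : pdMulti α (pdCoord i f) = pdMulti (α + Pi.single i 1) f := by
  rw [pdMulti_eq_iterPd, pdMulti_eq_iterPd, show pdCoord i f = iterPd [i] f from rfl,
    ← iterPd_append]
  refine iterPd_perm hf (List.perm_iff_count.mpr fun j => ?_)
  simp [count_multiIndexList, List.count_singleton, Pi.single_apply, eq_comm (a := j)]

end PartialDerivatives

section Squeezed

variable {d : ℕ} [NeZero d]

variable (d) in
def squeezedDecay : Submodule ℂ ((Fin d → ℝ) → ℂ) where
  carrier := {g | ∀ (k : ℤ) (β : Fin d → ℕ), ∃ C, SqBound k β 0 g C}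
  zero_mem' k β := ⟨0, fun x _ => by simp [pdMulti_zero]⟩
  add_mem' {g h} hg hh k β := by
    obtain ⟨C₁, hC₁⟩ := hg k β
    obtain ⟨C₂, hC₂⟩ := hh k β
    refine ⟨C₁ + C₂, fun x hx => ?_⟩
    have h₁ := hC₁ x hx
    have h₂ := hC₂ x hx
    simp only [pdMulti_zero] at h₁ h₂ ⊢
    calc _ ≤ |x 0| ^ k * |∏ j ∈ Finset.univ.erase 0, x j ^ β j| * (‖g x‖ + ‖h x‖) := by
          gcongr; exact norm_add_le _ _
      _ ≤ C₁ + C₂ := by linarith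
  smul_mem' c g hg k β := by
    obtain ⟨C, hC⟩ := hg k β
    refine ⟨‖c‖ * C, fun x hx => ?_⟩
    have h := hC x hx
    simp only [pdMulti_zero] at h ⊢
    calc _ = ‖c‖ * (|x 0| ^ k * |∏ j ∈ Finset.univ.erase 0, x j ^ β j| * ‖g x‖) := by
          simp only [Pi.smul_apply, smul_eq_mul, norm_mul]; ring
      _ ≤ ‖c‖ * C := by gcongr

theorem mem_squeezedDecay {g : (Fin d → ℝ) → ℂ} :
    g ∈ squeezedDecay d ↔ ∀ (k : ℤ) (β : Fin d → ℕ), ∃ C, SqBound k β 0 g C :=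
  Iff.rfl

theorem isSqueezed_iff {f : (Fin d → ℝ) → ℂ} :
    IsSqueezed f ↔ ContDiff ℝ ∞ f ∧ ∀ α, pdMulti α f ∈ squeezedDecay d := by
  simp only [IsSqueezed, mem_squeezedDecay, SqBound, pdMulti_zero]
  exact and_congr_right fun _ => ⟨fun h α k β => h k β α, fun h k β α => h α k β⟩

theorem IsSqueezed.mem_squeezedDecay {f : (Fin d → ℝ) → ℂ} (hf : IsSqueezed f) :
    f ∈ squeezedDecay d := by
  simpa [pdMulti_zero] using (isSqueezed_iff.mp hf).2 0

theorem IsSqueezed.pdCoord {f : (Fin d → ℝ) → ℂ} (hf : IsSqueezed f) (i : Fin d) :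
    IsSqueezed (pdCoord i f) := by
  refine ⟨pdCoord_contDiff hf.1 i, fun k β α => ?_⟩
  simpa only [SqBound, pdMulti_pdCoord hf.1] using hf.2 k β (α + Pi.single i 1)

end Squeezed

section PieceMonomial

def pieceMonomial (a b : ℂ) (k : ℤ) (t : ℝ) : ℂ :=
  (if 0 < t then a else if t < 0 then b else 0) * (t : ℂ) ^ k

variable {a b : ℂ} {k : ℤ}

@[simp]
theorem pieceMonomial_zero : pieceMonomial a b k 0 = 0 := by
  simp [pieceMonomial]

theorem norm_pieceMonomial_le (t : ℝ) : ‖pieceMonomial a b k t‖ ≤ max ‖a‖ ‖b‖ * |t| ^ k := by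
  rcases lt_trichotomy t 0 with ht | rfl | ht
  · simpa [pieceMonomial, ht, ht.not_gt, norm_zpow] using
      mul_le_mul_of_nonneg_right (le_max_right _ _) (by positivity)
  · rw [pieceMonomial_zero, norm_zero]
    positivity
  · simpa [pieceMonomial, ht, norm_zpow] using
      mul_le_mul_of_nonneg_right (le_max_left _ _) (by positivity)

theorem hasDerivAt_pieceMonomial {t : ℝ} (ht : t ≠ 0) :
    HasDerivAt (pieceMonomial a b k) (k * pieceMonomial a b (k - 1) t) t := by
  set c : ℂ := if 0 < t then a else if t < 0 then b else 0
  have hc : ∀ᶠ s in 𝓝 t, pieceMonomial a b k s = c * (s : ℂ) ^ k := by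
    rcases ht.lt_or_gt with ht | ht
    · filter_upwards [eventually_lt_nhds ht] with s hs
      simp [pieceMonomial, c, hs, hs.not_gt, ht, ht.not_gt]
    · filter_upwards [eventually_gt_nhds ht] with s hs
      simp [pieceMonomial, c, hs, ht]
  have hzpow := (hasDerivAt_zpow k (t : ℂ) (Or.inl (by exact_mod_cast ht))).comp_ofReal
  refine ((hzpow.const_mul c).congr_of_eventuallyEq hc).congr_deriv ?_
  simp only [pieceMonomial, c]
  ring

end PieceMonomial

section PieceMonomialMul

variable {d : ℕ} [NeZero d]

def pieceMonomialMul (a b : ℂ) (k : ℤ) (f : (Fin d → ℝ) → ℂ) (x : Fin d → ℝ) : ℂ :=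
  pieceMonomial a b k (x 0) * f x

variable {a b : ℂ} {k : ℤ} {f : (Fin d → ℝ) → ℂ}

theorem norm_pieceMonomialMul_le (x : Fin d → ℝ) :
    ‖pieceMonomialMul a b k f x‖ ≤ max ‖a‖ ‖b‖ * (|x 0| ^ k * ‖f x‖) := by
  rw [pieceMonomialMul, norm_mul, ← mul_assoc]
  gcongr
  exact norm_pieceMonomial_le _

theorem pieceMonomialMul_mem_squeezedDecay (hf : f ∈ squeezedDecay d) :
    pieceMonomialMul a b k f ∈ squeezedDecay d := by
  intro k' β
  obtain ⟨C, hC⟩ := hf (k' + k) β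
  refine ⟨max ‖a‖ ‖b‖ * C, fun x hx => ?_⟩
  have hfx := hC x hx
  simp only [pdMulti_zero] at hfx ⊢
  rw [zpow_add₀ (abs_ne_zero.mpr hx)] at hfx
  calc _ ≤ |x 0| ^ k' * |∏ j ∈ Finset.univ.erase 0, x j ^ β j| *
          (max ‖a‖ ‖b‖ * (|x 0| ^ k * ‖f x‖)) := by
        gcongr; exact norm_pieceMonomialMul_le x
    _ = max ‖a‖ ‖b‖ * (|x 0| ^ k' * |x 0| ^ k * |∏ j ∈ Finset.univ.erase 0, x j ^ β j| *
          ‖f x‖) := by ring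
    _ ≤ max ‖a‖ ‖b‖ * C := by gcongr

theorem hasFDerivAt_pieceMonomialMul_of_ne {x : Fin d → ℝ} (hx : x 0 ≠ 0)
    (hf : DifferentiableAt ℝ f x) :
    HasFDerivAt (pieceMonomialMul a b k f)
      (pieceMonomial a b k (x 0) • fderiv ℝ f x + f x •
        (ContinuousLinearMap.proj (R := ℝ) 0).smulRight (k * pieceMonomial a b (k - 1) (x 0))) x :=
  ((hasDerivAt_pieceMonomial hx).hasFDerivAt.comp x
    (ContinuousLinearMap.proj (R := ℝ) (φ := fun _ : Fin d => ℝ) 0).hasFDerivAt).mul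
    hf.hasFDerivAt

/-- On `{x 0 = 0}` the decay of `f` gives `|M f (x + h)| ≤ C |h 0|²`. -/
theorem hasFDerivAt_pieceMonomialMul_of_eq_zero (hf : f ∈ squeezedDecay d) {x : Fin d → ℝ}
    (hx : x 0 = 0) : HasFDerivAt (pieceMonomialMul a b k f) (0 : (Fin d → ℝ) →L[ℝ] ℂ) x := by
  obtain ⟨C, hC⟩ := hf (k - 2) 0
  have hbound : ∀ h : Fin d → ℝ,
      ‖pieceMonomialMul a b k f (x + h)‖ ≤ max ‖a‖ ‖b‖ * max C 0 * ‖h‖ ^ 2 := by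
    intro h
    by_cases hh : h 0 = 0
    · simp only [pieceMonomialMul, Pi.add_apply, hx, hh, add_zero, pieceMonomial_zero, zero_mul,
        norm_zero]
      positivity
    have hx0 : (x + h) 0 = h 0 := by simp [hx]
    have hCx := hC (x + h) (hx0 ▸ hh)
    simp only [pdMulti_zero, Pi.zero_apply, pow_zero, Finset.prod_const_one, abs_one, mul_one,
      hx0] at hCx
    have hsplit : |h 0| ^ k = |h 0| ^ 2 * |h 0| ^ (k - 2) := by
      rw [← zpow_natCast, ← zpow_add₀ (abs_ne_zero.mpr hh)]
      norm_num
    calc _ ≤ max ‖a‖ ‖b‖ * (|h 0| ^ k * ‖f (x + h)‖) := hx0 ▸ norm_pieceMonomialMul_le _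
      _ = max ‖a‖ ‖b‖ * (|h 0| ^ 2 * (|h 0| ^ (k - 2) * ‖f (x + h)‖)) := by
        rw [hsplit]; ring
      _ ≤ max ‖a‖ ‖b‖ * (‖h‖ ^ 2 * max C 0) := by
        gcongr
        · exact norm_le_pi_norm h 0
        · exact hCx.trans (le_max_left _ _)
      _ = _ := by ring
  rw [hasFDerivAt_iff_isLittleO_nhds_zero]
  have hsq : (fun h : Fin d → ℝ => ‖h‖ ^ 2) =o[𝓝 0] fun h => h :=
    Asymptotics.isLittleO_norm_pow_id one_lt_two
  refine Asymptotics.IsBigO.trans_isLittleO ?_ hsq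
  refine Asymptotics.IsBigO.of_bound (max ‖a‖ ‖b‖ * max C 0) (Eventually.of_forall fun h => ?_)
  simpa [pieceMonomialMul, hx] using hbound h

theorem differentiable_pieceMonomialMul (hf : IsSqueezed f) :
    Differentiable ℝ (pieceMonomialMul a b k f) := fun x => by
  by_cases hx : x 0 = 0
  · exact (hasFDerivAt_pieceMonomialMul_of_eq_zero hf.mem_squeezedDecay hx).differentiableAt
  · exact (hasFDerivAt_pieceMonomialMul_of_ne hx
      (hf.1.differentiable (by simp) x)).differentiableAt

theorem pdCoord_pieceMonomialMul (hf : IsSqueezed f) (i : Fin d) :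
    pdCoord i (pieceMonomialMul a b k f) =
      (if i = 0 then (k : ℂ) • pieceMonomialMul a b (k - 1) f else 0) +
        pieceMonomialMul a b k (pdCoord i f) := by
  funext x
  by_cases hx : x 0 = 0
  · rw [pdCoord, (hasFDerivAt_pieceMonomialMul_of_eq_zero hf.mem_squeezedDecay hx).fderiv]
    split_ifs <;> simp [pieceMonomialMul, hx]
  · rw [pdCoord, (hasFDerivAt_pieceMonomialMul_of_ne hx (hf.1.differentiable (by simp) x)).fderiv]
    split_ifs with hi
    · subst hi
      simp only [add_apply, smul_apply, smul_eq_mul,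
        ContinuousLinearMap.smulRight_apply, ContinuousLinearMap.proj_apply, Pi.single_eq_same,
        one_smul, Pi.add_apply, Pi.smul_apply, pieceMonomialMul, pdCoord]
      ring
    · simp [pieceMonomialMul, pdCoord, hi]

end PieceMonomialMul

section PieceMonomialSpan

variable {d : ℕ} [NeZero d] {a b : ℂ} {g : (Fin d → ℝ) → ℂ}

variable (d a b) in
def pieceMonomialSpan : Submodule ℂ ((Fin d → ℝ) → ℂ) :=
  Submodule.span ℂ {g | ∃ k f, IsSqueezed f ∧ g = pieceMonomialMul a b k f}

theorem pieceMonomialMul_mem_pieceMonomialSpan {f : (Fin d → ℝ) → ℂ} (hf : IsSqueezed f)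
    (k : ℤ) : pieceMonomialMul a b k f ∈ pieceMonomialSpan d a b :=
  Submodule.subset_span ⟨k, f, hf, rfl⟩

theorem pieceMonomialSpan_le_squeezedDecay : pieceMonomialSpan d a b ≤ squeezedDecay d :=
  Submodule.span_le.mpr fun _ ⟨_, _, hf, hg⟩ =>
    hg ▸ pieceMonomialMul_mem_squeezedDecay hf.mem_squeezedDecay

theorem differentiable_and_pdCoord_mem_of_mem_pieceMonomialSpan
    (hg : g ∈ pieceMonomialSpan d a b) :
    Differentiable ℝ g ∧ ∀ i, pdCoord i g ∈ pieceMonomialSpan d a b := by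
  induction hg using Submodule.span_induction with
  | mem _ hg =>
    obtain ⟨k, f, hf, rfl⟩ := hg
    refine ⟨differentiable_pieceMonomialMul hf, fun i => ?_⟩
    rw [pdCoord_pieceMonomialMul hf]
    refine add_mem ?_ (pieceMonomialMul_mem_pieceMonomialSpan (hf.pdCoord i) k)
    split_ifs
    · exact Submodule.smul_mem _ _ (pieceMonomialMul_mem_pieceMonomialSpan hf (k - 1))
    · exact zero_mem _
  | zero => exact ⟨differentiable_const 0, fun i => by rw [pdCoord_zero]; exact zero_mem _⟩
  | add g h _ _ hg hh =>
    exact ⟨hg.1.add hh.1, fun i => pdCoord_add hg.1 hh.1 i ▸ add_mem (hg.2 i) (hh.2 i)⟩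
  | smul c g _ hg =>
    exact ⟨hg.1.const_smul c, fun i => pdCoord_smul c hg.1 i ▸ Submodule.smul_mem _ c (hg.2 i)⟩

theorem contDiff_of_mem_pieceMonomialSpan (hg : g ∈ pieceMonomialSpan d a b) :
    ContDiff ℝ ∞ g := by
  refine contDiff_infty_of_forall_fderiv_apply
    (fun _ hg => (differentiable_and_pdCoord_mem_of_mem_pieceMonomialSpan hg).1)
    (fun g hg v => ?_) hg
  have hsum : (fun x => fderiv ℝ g x v) = ∑ i, v i • pdCoord i g := by
    funext x
    simp [fderiv_apply_eq_sum_pdCoord, Finset.sum_apply]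
  rw [hsum]
  exact Submodule.sum_mem _ fun i _ => Submodule.smul_of_tower_mem _ (v i)
    ((differentiable_and_pdCoord_mem_of_mem_pieceMonomialSpan hg).2 i)

theorem iterPd_mem_pieceMonomialSpan (hg : g ∈ pieceMonomialSpan d a b) (l : List (Fin d)) :
    iterPd l g ∈ pieceMonomialSpan d a b := by
  induction l with
  | nil => exact hg
  | cons i l ih => exact (differentiable_and_pdCoord_mem_of_mem_pieceMonomialSpan ih).2 i

theorem isSqueezed_of_mem_pieceMonomialSpan (hg : g ∈ pieceMonomialSpan d a b) :
    IsSqueezed g :=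
  isSqueezed_iff.mpr ⟨contDiff_of_mem_pieceMonomialSpan hg, fun α =>
    pieceMonomialSpan_le_squeezedDecay (pdMulti_eq_iterPd α g ▸ iterPd_mem_pieceMonomialSpan hg _)⟩

theorem isMultiplicator_of_eq_pieceMonomial {M : (Fin d → ℝ) → ℂ} (a b : ℂ) (k : ℤ)
    (hM : ∀ x, x 0 ≠ 0 → M x = pieceMonomial a b k (x 0)) : IsMultiplicator M := by
  intro f hf
  have hMf : (fun x => if x 0 = 0 then 0 else M x * f x) = pieceMonomialMul a b k f := by
    funext x
    by_cases hx : x 0 = 0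
    · simp [pieceMonomialMul, hx]
    · simp [pieceMonomialMul, hx, hM x hx]
  rw [hMf]
  exact isSqueezed_of_mem_pieceMonomialSpan (pieceMonomialMul_mem_pieceMonomialSpan hf k)

end PieceMonomialSpan

/-- The Heaviside functions `Θ(p⁺)` and `Θ(−p⁺)`, and the functions
`|p⁺|^k` for every `k ∈ ℤ` (in particular the non-locally-integrable `1/|p⁺|`),
restricted to `ℝ^{n+1} ∖ {p⁺ = 0}`, are multiplicators in `S_{p⁺}(ℝ^{n+1})`. -/
theorem statement13 (n : ℕ) :
    IsMultiplicator (fun x : Fin (n + 1) → ℝ => if 0 < x 0 then (1 : ℂ) else 0) ∧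
    IsMultiplicator (fun x : Fin (n + 1) → ℝ => if x 0 < 0 then (1 : ℂ) else 0) ∧
    ∀ k : ℤ, IsMultiplicator (fun x : Fin (n + 1) → ℝ => ((|x 0| ^ k : ℝ) : ℂ)) := by
  refine ⟨isMultiplicator_of_eq_pieceMonomial 1 0 0 fun x _ => ?_,
    isMultiplicator_of_eq_pieceMonomial 0 1 0 fun x hx => ?_,
    fun k => isMultiplicator_of_eq_pieceMonomial 1 ((-1) ^ k) k fun x hx => ?_⟩
  · simp [pieceMonomial]
  · rcases hx.lt_or_gt with h | h <;> simp [pieceMonomial, h, h.not_gt]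
  · rcases hx.lt_or_gt with h | h
    · simp [pieceMonomial, h, h.not_gt, abs_of_neg h, ← mul_zpow]
    · simp [pieceMonomial, h, abs_of_pos h]
end
end
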